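/- arXiv:2405.17340 — 4 statements merged into one kernel-verified Lean document; each statement's English description precedes it below -/
import Mathlib

section
/- Let k be a prime and m, n integers. Then ∑_{a ∈ (ℤ/kℤ)^×} S(a,m;k) S(a,n;k) equals: k² - k - 1 if m ≡ n ≢ 0 (mod k); k - 1 if m ≡ n ≡ 0 (mod k); -1 if exactly one of m, n is ≡ 0 (mod k); and -k - 1 if m ≢ n and both are ≢ 0 (mod k). -/
open scoped BigOperators

/-- `e(t) = exp(2πit)`. -/
noncomputable def ec (t : ℝ) : ℂ := Complex.exp (2 * Real.pi * Complex.I * t)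

/-- The Kloosterman sum `S(a,b;c) = ∑_{x ∈ (ℤ/cℤ)ˣ} e((a x + b x⁻¹)/c)`. -/
noncomputable def Kloosterman (a b : ℤ) (c : ℕ) [NeZero c] : ℂ :=
  ∑ x : (ZMod c)ˣ,
    ec (((a * (((x : ZMod c)).val : ℤ) + b * ((((x⁻¹ : (ZMod c)ˣ) : ZMod c)).val : ℤ) : ℤ) : ℝ) / c)

namespace KlAux

lemma ec_add (s t : ℝ) : ec (s + t) = ec s * ec t := by
  simp [ec, mul_add, Complex.exp_add]

lemma ec_int (n : ℤ) : ec n = 1 := by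
  rw [ec, show (2 * (Real.pi:ℂ) * Complex.I * (n:ℝ) : ℂ) = (n:ℤ) * (2 * Real.pi * Complex.I) by push_cast; ring,
    Complex.exp_int_mul_two_pi_mul_I]

lemma ec_zero : ec 0 = 1 := by simp [ec]

noncomputable def ψ (k : ℕ) [NeZero k] (x : ZMod k) : ℂ := ec ((x.val : ℝ) / k)

lemma psi_int (k : ℕ) [NeZero k] (n : ℤ) : ec ((n : ℝ) / k) = ψ k (n : ZMod k) := by
  obtain ⟨t, ht⟩ : (k:ℤ) ∣ (n - (((n : ZMod k)).val : ℤ)) := by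
    rw [← ZMod.intCast_zmod_eq_zero_iff_dvd]
    push_cast
    simp [ZMod.natCast_val, ZMod.intCast_cast, ZMod.cast_id]
  have hn : (n : ℝ) = (((n : ZMod k)).val : ℝ) + k * t := by
    have : (n : ℝ) - (((n : ZMod k)).val : ℝ) = (k:ℝ) * t := by exact_mod_cast congrArg (Int.cast : ℤ → ℝ) ht
    linarith
  have hk : (k:ℝ) ≠ 0 := Nat.cast_ne_zero.mpr (NeZero.ne k)
  rw [hn, show ((((n : ZMod k)).val : ℝ) + k * t) / k = (((n : ZMod k)).val : ℝ)/k + t by field_simp,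
    ec_add, ec_int, mul_one, ψ]

lemma psi_zero (k : ℕ) [NeZero k] : ψ k 0 = 1 := by simp [ψ, ec_zero, ZMod.val_zero]

lemma psi_add (k : ℕ) [NeZero k] (x y : ZMod k) : ψ k (x + y) = ψ k x * ψ k y := by
  have h := psi_int k ((x.val : ℤ) + (y.val : ℤ))
  have h2 : ((((x.val : ℤ) + (y.val : ℤ)) : ℤ) : ZMod k) = x + y := by
    push_cast
    simp [ZMod.natCast_val, ZMod.cast_id]
  rw [h2] at h
  rw [← h]
  push_cast
  rw [add_div, ec_add, ψ, ψ]

lemma psi_one_ne_one (k : ℕ) [NeZero k] (hk : 2 ≤ k) : ψ k 1 ≠ 1 := by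
  haveI : Fact (1 < k) := ⟨hk⟩
  rw [ψ, ZMod.val_one, ec]
  intro h
  rw [Complex.exp_eq_one_iff] at h
  obtain ⟨t, ht⟩ := h
  have h2 : (2 * (Real.pi:ℂ) * Complex.I) ≠ 0 := by
    simp [Real.pi_ne_zero, Complex.I_ne_zero]
  have h3 : ((((1:ℕ):ℝ)/k : ℝ) : ℂ) = (t : ℂ) := by
    apply mul_right_cancel₀ h2
    push_cast at ht ⊢
    linear_combination ht
  have h4 : ((1:ℝ)/k) = (t : ℝ) := by exact_mod_cast h3
  have hk0 : (0:ℝ) < k := by positivity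
  have hlt : (1:ℝ)/k < 1 := by
    rw [div_lt_one hk0]; exact_mod_cast hk
  have hgt : (0:ℝ) < 1/k := by positivity
  rw [h4] at hlt hgt
  have : (0:ℤ) < t := by exact_mod_cast hgt
  have : (t:ℝ) ≥ 1 := by exact_mod_cast this
  linarith

lemma sum_psi (k : ℕ) [NeZero k] (hk : 2 ≤ k) : ∑ x : ZMod k, ψ k x = 0 := by
  have h : ∑ x : ZMod k, ψ k (1 + x) = ∑ x : ZMod k, ψ k x :=
    Fintype.sum_equiv (Equiv.addLeft (1 : ZMod k)) _ _ (fun x => rfl)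
  simp only [psi_add] at h
  rw [← Finset.mul_sum] at h
  have := psi_one_ne_one k hk
  have h2 : (ψ k 1 - 1) * ∑ x : ZMod k, ψ k x = 0 := by linear_combination h
  rcases mul_eq_zero.mp h2 with h3 | h3
  · exact absurd (by linear_combination h3) this
  · exact h3

lemma sum_psi_mul (k : ℕ) [NeZero k] (hp : k.Prime) (c : ZMod k) :
    ∑ x : ZMod k, ψ k (c * x) = if c = 0 then (k:ℂ) else 0 := by
  haveI : Fact k.Prime := ⟨hp⟩
  split_ifs with hc
  · simp [hc, psi_zero, ZMod.card]
  · have h : ∑ x : ZMod k, ψ k (c * x) = ∑ x : ZMod k, ψ k x :=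
      Fintype.sum_equiv (Equiv.mulLeft₀ c hc) _ _ (fun x => rfl)
    rw [h, sum_psi k hp.two_le]

lemma sum_units_eq (k : ℕ) [NeZero k] (hp : k.Prime) (f : ZMod k → ℂ) :
    ∑ a : (ZMod k)ˣ, f a = (∑ x : ZMod k, f x) - f 0 := by
  haveI : Fact k.Prime := ⟨hp⟩
  have h1 : ∑ a : (ZMod k)ˣ, f a = ∑ x : {x : ZMod k // x ≠ 0}, f x :=
    Fintype.sum_equiv unitsEquivNeZero _ _ (fun a => rfl)
  have h2 : ∑ x ∈ (Finset.univ.erase (0 : ZMod k)), f x = ∑ x : {x : ZMod k // x ≠ 0}, f x := by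
    rw [← Finset.sum_subtype (Finset.univ.erase (0 : ZMod k)) (fun x => by simp) f]
  rw [h1, ← h2, eq_sub_iff_add_eq, Finset.sum_erase_add _ _ (Finset.mem_univ 0)]

/-- Ramanujan-type sum over units. -/
lemma R_eq (k : ℕ) [NeZero k] (hp : k.Prime) (c : ZMod k) :
    ∑ a : (ZMod k)ˣ, ψ k (c * a) = (if c = 0 then (k:ℂ) else 0) - 1 := by
  rw [sum_units_eq k hp (fun x => ψ k (c * x)), sum_psi_mul k hp, mul_zero, psi_zero]

noncomputable def Kl (k : ℕ) [NeZero k] (u b : ZMod k) : ℂ :=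
  ∑ x : (ZMod k)ˣ, ψ k (u * x + b * (x⁻¹ : (ZMod k)ˣ))

lemma kl_eq (k : ℕ) [NeZero k] (a b : ℤ) :
    Kloosterman a b k = Kl k (a : ZMod k) (b : ZMod k) := by
  rw [Kloosterman, Kl]
  refine Finset.sum_congr rfl (fun x _ => ?_)
  rw [psi_int]
  congr 1
  push_cast
  simp [ZMod.natCast_val, ZMod.cast_id]

lemma key (k : ℕ) [NeZero k] (hp : k.Prime) (mz nz : ZMod k) :
    ∑ a : (ZMod k)ˣ, Kl k a mz * Kl k a nz
      = k * ((if mz - nz = 0 then (k:ℂ) else 0) - 1)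
        - ((if mz = 0 then (k:ℂ) else 0) - 1) * ((if nz = 0 then (k:ℂ) else 0) - 1) := by
  have expand : ∀ a : (ZMod k)ˣ, Kl k a mz * Kl k a nz
      = ∑ x : (ZMod k)ˣ, ∑ y : (ZMod k)ˣ,
          ψ k (((x : ZMod k) + y) * a) * ψ k (mz * (x⁻¹ : (ZMod k)ˣ) + nz * (y⁻¹ : (ZMod k)ˣ)) := by
    intro a
    rw [Kl, Kl, Finset.sum_mul_sum]
    refine Finset.sum_congr rfl fun x _ => Finset.sum_congr rfl fun y _ => ?_
    rw [← psi_add, ← psi_add]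
    congr 1
    ring
  simp only [expand]
  rw [Finset.sum_comm]
  have swap2 : ∀ x : (ZMod k)ˣ,
      (∑ a : (ZMod k)ˣ, ∑ y : (ZMod k)ˣ,
          ψ k (((x : ZMod k) + y) * a) * ψ k (mz * (x⁻¹ : (ZMod k)ˣ) + nz * (y⁻¹ : (ZMod k)ˣ)))
      = ∑ y : (ZMod k)ˣ,
          ((if ((x : ZMod k) + y) = 0 then (k:ℂ) else 0) - 1) * ψ k (mz * (x⁻¹ : (ZMod k)ˣ) + nz * (y⁻¹ : (ZMod k)ˣ)) := by
    intro x
    rw [Finset.sum_comm]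
    refine Finset.sum_congr rfl fun y _ => ?_
    rw [← Finset.sum_mul, R_eq k hp]
  simp only [swap2]
  have split : ∀ x : (ZMod k)ˣ,
      (∑ y : (ZMod k)ˣ,
          ((if ((x : ZMod k) + y) = 0 then (k:ℂ) else 0) - 1) * ψ k (mz * (x⁻¹ : (ZMod k)ˣ) + nz * (y⁻¹ : (ZMod k)ˣ)))
      = (k:ℂ) * ψ k ((mz - nz) * (x⁻¹ : (ZMod k)ˣ))
        - ∑ y : (ZMod k)ˣ, ψ k (mz * (x⁻¹ : (ZMod k)ˣ)) * ψ k (nz * (y⁻¹ : (ZMod k)ˣ)) := by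
    intro x
    simp only [sub_mul, ite_mul, zero_mul, one_mul, Finset.sum_sub_distrib]
    congr 1
    · have hcond : ∀ y : (ZMod k)ˣ, ((x : ZMod k) + y = 0) ↔ y = -x := by
        intro y
        constructor
        · intro h
          ext
          rw [Units.val_neg]
          linear_combination h
        · intro h
          rw [h, Units.val_neg]
          ring
      simp only [hcond]
      rw [Finset.sum_ite_eq' Finset.univ (-x)
        (fun y => (k:ℂ) * ψ k (mz * (x⁻¹ : (ZMod k)ˣ) + nz * ((y⁻¹ : (ZMod k)ˣ) : ZMod k)))]
      simp only [Finset.mem_univ, if_true]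
      congr 2
      rw [inv_neg, Units.val_neg]
      ring
    · refine Finset.sum_congr rfl fun y _ => ?_
      rw [← psi_add]
  simp only [split]
  have inv_sum : ∀ c : ZMod k,
      ∑ x : (ZMod k)ˣ, ψ k (c * ((x⁻¹ : (ZMod k)ˣ) : ZMod k)) = (if c = 0 then (k:ℂ) else 0) - 1 := by
    intro c
    rw [show (∑ x : (ZMod k)ˣ, ψ k (c * ((x⁻¹ : (ZMod k)ˣ) : ZMod k)))
        = ∑ y : (ZMod k)ˣ, ψ k (c * y) from
      Fintype.sum_equiv (Equiv.inv (ZMod k)ˣ) _ _ (fun x => rfl), R_eq k hp]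
  simp only [← Finset.mul_sum]
  rw [Finset.sum_sub_distrib, ← Finset.mul_sum, ← Finset.sum_mul, inv_sum (mz - nz), inv_sum mz,
    inv_sum nz]

end KlAux

/-- Correlation of two Kloosterman sums over reduced residues of the first argument,
for prime modulus `k`. -/
theorem sum_kloosterman_correlation (k : ℕ) [NeZero k] (hk : k.Prime) (m n : ℤ) :
    ∑ a : (ZMod k)ˣ,
        Kloosterman (((a : ZMod k)).val : ℤ) m k * Kloosterman (((a : ZMod k)).val : ℤ) n k
      = if (m : ZMod k) = (n : ZMod k) then
          (if (m : ZMod k) = 0 then ((k : ℂ) - 1) else ((k : ℂ)^2 - k - 1))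
        else
          (if (m : ZMod k) = 0 ∨ (n : ZMod k) = 0 then -1 else (-(k : ℂ) - 1)) := by
  have hterm : ∀ a : (ZMod k)ˣ, ∀ b : ℤ,
      Kloosterman (((a : ZMod k)).val : ℤ) b k = KlAux.Kl k a (b : ZMod k) := by
    intro a b
    rw [KlAux.kl_eq]
    congr 1
    push_cast
    simp [ZMod.natCast_val, ZMod.cast_id]
  simp only [hterm]
  rw [KlAux.key k hk]
  by_cases h : (m : ZMod k) = (n : ZMod k)
  · rw [if_pos h, if_pos (sub_eq_zero.mpr h)]
    by_cases hm : (m : ZMod k) = 0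
    · rw [if_pos hm, if_pos hm, if_pos (h ▸ hm)]
      ring
    · have hn : (n : ZMod k) ≠ 0 := fun hn => hm (h ▸ hn)
      rw [if_neg hm, if_neg hm, if_neg hn]
      ring
  · rw [if_neg h, if_neg (fun h0 => h (sub_eq_zero.mp h0))]
    by_cases hm : (m : ZMod k) = 0
    · have hn : (n : ZMod k) ≠ 0 := fun hn => h (hm.trans hn.symm)
      rw [if_pos hm, if_neg hn, if_pos (Or.inl hm)]
      ring
    · by_cases hn : (n : ZMod k) = 0
      · rw [if_neg hm, if_pos hn, if_pos (Or.inr hn)]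
        ring
      · rw [if_neg hm, if_neg hn, if_neg (by tauto)]
        ring
end

section
/- Let h ∈ ℤ and k ∈ ℤ_+ be coprime, and define the discrete Fourier transform Ŝ(h,ξ;k) = (1/k) ∑_{ℓ=1}^{k} S(h,ℓ;k) e(-ℓξ/k) for ξ ∈ ℤ. Then ∑_{ξ=1}^{k} |Ŝ(h,ξ;k)| ≪ k·d(k), where d(k) is the number of divisors of k. -/
open scoped BigOperators

/-- The discrete Fourier transform `Ŝ(h,ξ;k) = (1/k) ∑_{ℓ=1}^k S(h,ℓ;k) e(-ℓξ/k)`. -/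
noncomputable def KloostermanHat (h ξ : ℤ) (k : ℕ) [NeZero k] : ℂ :=
  (k : ℂ)⁻¹ * ∑ ℓ ∈ Finset.Icc 1 k, Kloosterman h (ℓ : ℤ) k * ec (-(((ℓ : ℤ) * ξ : ℤ) : ℝ) / k)

lemma ec_add (s t : ℝ) : ec (s + t) = ec s * ec t := by
  rw [ec, ec, ec, ← Complex.exp_add]; congr 1; push_cast; ring

lemma abs_ec (t : ℝ) : ‖ec t‖ = 1 := by
  rw [ec, show (2 * Real.pi * Complex.I * (t:ℂ)) = ((2*Real.pi*t : ℝ):ℂ) * Complex.I by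
    push_cast; ring, Complex.norm_exp_ofReal_mul_I]

lemma ec_int (n : ℤ) : ec (n : ℝ) = 1 := by
  rw [ec, show (2 * Real.pi * Complex.I * ((n:ℝ):ℂ)) = (n:ℂ) * (2 * Real.pi * Complex.I) by
    push_cast; ring, Complex.exp_int_mul_two_pi_mul_I]

lemma ec_nat_mul (n : ℕ) (t : ℝ) : ec (n * t) = ec t ^ n := by
  rw [ec, ec, ← Complex.exp_nat_mul]; congr 1; push_cast; ring

lemma sum_ec_mul (k : ℕ) [NeZero k] (m : ℤ) :
    ∑ ℓ ∈ Finset.Icc 1 k, ec ((((ℓ:ℤ) * m : ℤ) : ℝ) / k) = if (k:ℤ) ∣ m then (k:ℂ) else 0 := by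
  have hk : (k:ℝ) ≠ 0 := Nat.cast_ne_zero.mpr (NeZero.ne k)
  have hterm : ∀ ℓ ∈ Finset.Icc 1 k,
      ec ((((ℓ:ℤ) * m : ℤ) : ℝ) / k) = (ec ((m:ℝ)/k)) ^ ℓ := by
    intro ℓ _
    rw [← ec_nat_mul]; congr 1; push_cast; ring
  rw [Finset.sum_congr rfl hterm]
  by_cases hdvd : (k:ℤ) ∣ m
  · obtain ⟨d, rfl⟩ := hdvd
    have hω : ec (((((k:ℤ)*d : ℤ)):ℝ)/k) = 1 := by
      rw [show ((((k:ℤ)*d : ℤ)):ℝ)/k = ((d:ℤ):ℝ) by push_cast; field_simp]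
      exact ec_int d
    simp only [hω, one_pow, Finset.sum_const, Nat.card_Icc, Nat.add_sub_cancel, nsmul_eq_mul,
      mul_one]
    rw [if_pos ⟨d, rfl⟩]
  · have hω1 : ec ((m:ℝ)/k) ≠ 1 := by
      intro hω
      apply hdvd
      rw [ec, Complex.exp_eq_one_iff] at hω
      obtain ⟨n, hn⟩ := hω
      have h2 : (2 * (Real.pi:ℂ) * Complex.I) ≠ 0 := by
        simp [Real.pi_ne_zero, Complex.I_ne_zero]
      have hmk : (((m:ℝ)/k : ℝ):ℂ) = (n:ℂ) := by
        apply mul_left_cancel₀ h2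
        rw [hn]; push_cast; ring
      have : (m:ℝ)/k = (n:ℝ) := by exact_mod_cast hmk
      have : (m:ℝ) = n * k := by field_simp at this; linarith
      refine ⟨n, ?_⟩
      have : (m:ℝ) = (k:ℝ) * n := by linarith
      exact_mod_cast this
    have hωk : ec ((m:ℝ)/k) ^ k = 1 := by
      rw [← ec_nat_mul, show (k:ℝ) * ((m:ℝ)/k) = ((m:ℤ):ℝ) by field_simp]
      exact ec_int m
    rw [if_neg hdvd]
    rw [show Finset.Icc 1 k = Finset.Ico 1 (k+1) by rw [Finset.Ico_add_one_right_eq_Icc],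
      Finset.sum_Ico_eq_sum_range]
    simp only [Nat.add_sub_cancel]
    have : ∀ j ∈ Finset.range k, ec ((m:ℝ)/k) ^ (1 + j) = ec ((m:ℝ)/k) * ec ((m:ℝ)/k) ^ j := by
      intro j _; rw [pow_add, pow_one]
    rw [Finset.sum_congr rfl this, ← Finset.mul_sum, geom_sum_eq hω1, hωk]
    simp

lemma abs_kloostermanHat_le_one (h ξ : ℤ) (k : ℕ) [NeZero k] :
    ‖KloostermanHat h ξ k‖ ≤ 1 := by
  classical
  have hk0 : (k:ℝ) ≠ 0 := Nat.cast_ne_zero.mpr (NeZero.ne k)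
  have hkpos : (0:ℝ) < k := by positivity
  set iv : (ZMod k)ˣ → ℤ := fun x => ((((x⁻¹ : (ZMod k)ˣ) : ZMod k)).val : ℤ) with hiv
  have expand : (∑ ℓ ∈ Finset.Icc 1 k, Kloosterman h (ℓ:ℤ) k * ec (-(((ℓ:ℤ) * ξ : ℤ):ℝ)/k))
      = ∑ x : (ZMod k)ˣ, ec (((h * (((x : ZMod k)).val : ℤ) : ℤ):ℝ)/k) *
          ∑ ℓ ∈ Finset.Icc 1 k, ec ((((ℓ:ℤ) * (iv x - ξ) : ℤ):ℝ)/k) := by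
    unfold Kloosterman
    simp only [Finset.sum_mul]
    rw [Finset.sum_comm]
    refine Finset.sum_congr rfl fun x _ => ?_
    rw [Finset.mul_sum]
    refine Finset.sum_congr rfl fun ℓ _ => ?_
    rw [← ec_add, ← ec_add]
    congr 1
    simp only [hiv]
    push_cast
    ring
  rw [KloostermanHat, expand, norm_mul, norm_inv, Complex.norm_natCast]
  have step1 : ‖∑ x : (ZMod k)ˣ, ec (((h * (((x : ZMod k)).val : ℤ) : ℤ):ℝ)/k) *
          ∑ ℓ ∈ Finset.Icc 1 k, ec ((((ℓ:ℤ) * (iv x - ξ) : ℤ):ℝ)/k)‖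
      ≤ ∑ x : (ZMod k)ˣ, (if (k:ℤ) ∣ (iv x - ξ) then (k:ℝ) else 0) := by
    refine (norm_sum_le _ _).trans (Finset.sum_le_sum fun x _ => ?_)
    rw [norm_mul, abs_ec, one_mul, sum_ec_mul]
    split_ifs
    · rw [Complex.norm_natCast]
    · simp
  have card_le : (Finset.univ.filter (fun x : (ZMod k)ˣ => (k:ℤ) ∣ (iv x - ξ))).card ≤ 1 := by
    refine Finset.card_le_one.mpr fun a ha b hb => ?_
    simp only [Finset.mem_filter] at ha hb
    have key : ∀ c : (ZMod k)ˣ, (k:ℤ) ∣ (iv c - ξ) →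
        ((c⁻¹ : (ZMod k)ˣ) : ZMod k) = (ξ : ZMod k) := by
      intro c hc
      have := (ZMod.intCast_zmod_eq_zero_iff_dvd (iv c - ξ) k).mpr hc
      push_cast at this
      have h2 : ((((c⁻¹ : (ZMod k)ˣ) : ZMod k)).val : ZMod k) = (ξ : ZMod k) := by
        rw [hiv] at this
        push_cast at this
        linear_combination this
      rwa [ZMod.natCast_val, ZMod.cast_id] at h2
    have : (a⁻¹ : (ZMod k)ˣ) = (b⁻¹ : (ZMod k)ˣ) :=
      Units.ext (by rw [key a ha.2, key b hb.2])
    exact inv_injective this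
  have step2 : ∑ x : (ZMod k)ˣ, (if (k:ℤ) ∣ (iv x - ξ) then (k:ℝ) else 0) ≤ k := by
    rw [← Finset.sum_filter, Finset.sum_const, nsmul_eq_mul]
    calc ((Finset.univ.filter (fun x : (ZMod k)ˣ => (k:ℤ) ∣ (iv x - ξ))).card : ℝ) * k
        ≤ 1 * k := by
          apply mul_le_mul_of_nonneg_right _ hkpos.le
          exact_mod_cast card_le
      _ = k := one_mul _
  calc ((k:ℝ))⁻¹ * ‖_‖ ≤ (k:ℝ)⁻¹ * k := by
        apply mul_le_mul_of_nonneg_left (step1.trans step2) (by positivity)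
    _ = 1 := inv_mul_cancel₀ hk0

/-- `∑_{ξ=1}^k |Ŝ(h,ξ;k)| ≪ k d(k)`, assuming the Weil bound
`|S(a,b;c)| ≤ d(c) c^{1/2} gcd(a,b,c)^{1/2}`. -/
theorem sum_abs_kloostermanHat_le
    (hWeil : ∀ (a b : ℤ) (c : ℕ) [NeZero c],
      ‖Kloosterman a b c‖
        ≤ (c.divisors.card : ℝ) * Real.sqrt c * Real.sqrt (Int.gcd (Int.gcd a b : ℤ) (c : ℤ))) :
    ∃ C : ℝ, 0 < C ∧ ∀ (h : ℤ) (k : ℕ) [NeZero k], IsCoprime h (k : ℤ) →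
      ∑ ξ ∈ Finset.Icc 1 k, ‖KloostermanHat h (ξ : ℤ) k‖
        ≤ C * k * (k.divisors.card : ℝ) := by
  refine ⟨1, one_pos, ?_⟩
  intro h k _ _
  have hd : (1:ℝ) ≤ (k.divisors.card : ℝ) := by
    have : 0 < k.divisors.card :=
      Finset.card_pos.mpr ⟨k, Nat.mem_divisors_self k (NeZero.ne k)⟩
    exact_mod_cast this
  calc ∑ ξ ∈ Finset.Icc 1 k, ‖KloostermanHat h (ξ:ℤ) k‖
      ≤ ∑ _ξ ∈ Finset.Icc 1 k, (1:ℝ) :=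
        Finset.sum_le_sum fun ξ _ => abs_kloostermanHat_le_one h ξ k
    _ = k := by simp
    _ ≤ 1 * k * (k.divisors.card : ℝ) := by nlinarith [Nat.cast_nonneg (α:=ℝ) k]
end

section
/- Let A : ℕ × ℕ → ℂ be the Hecke eigenvalues of a normalized SL₃(ℤ) Hecke–Maass cusp form, so that the multiplicativity relation A(m,d) = ∑_{ℓ | gcd(d,m)} μ(ℓ) A(1, d/ℓ) A(m/ℓ, 1) holds. Assume that uniformly in α ∈ ℝ one has ∑_{m ≤ x} A(m,1) e(mα) ≪_ε x^{3/4+ε} and that ∑_{m ≤ x} |A(1,m)| ≪_ε x^{1+ε}. Then for all d ∈ ℤ_+, x ≥ 1 and α ∈ ℝ, ∑_{m ≤ x} A(m,d) e(mα) ≪_ε d^{ϑ+ε} x^{3/4+ε}, uniformly in α and d, where ϑ is any exponent with |A(1,n)| ≪_ε n^{ϑ+ε}. -/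
open scoped BigOperators

lemma aux_pow2 (ε : ℝ) (hε : 0 < ε) (a : ℕ) :
    (a + 1 : ℝ) ≤ (1 + 1 / (ε * Real.log 2)) * (2 : ℝ) ^ ((a : ℝ) * ε) := by
  have hlog : 0 < Real.log 2 := Real.log_pos (by norm_num)
  have hK : 0 < 1 + 1 / (ε * Real.log 2) := by positivity
  have h1 : (2 : ℝ) ^ ((a : ℝ) * ε) = Real.exp ((a : ℝ) * ε * Real.log 2) := by
    rw [Real.rpow_def_of_pos (by norm_num)]; ring_nf
  have h2 : (a : ℝ) * ε * Real.log 2 + 1 ≤ Real.exp ((a : ℝ) * ε * Real.log 2) :=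
    Real.add_one_le_exp _
  have h3 : (a + 1 : ℝ) ≤ (1 + 1 / (ε * Real.log 2)) * ((a : ℝ) * ε * Real.log 2 + 1) := by
    have ha : (0:ℝ) ≤ a := Nat.cast_nonneg a
    have hεl : 0 < ε * Real.log 2 := mul_pos hε hlog
    have hd : 1 / (ε * Real.log 2) * (ε * Real.log 2) = 1 := by field_simp
    nlinarith [mul_nonneg ha hεl.le]
  calc (a + 1 : ℝ) ≤ (1 + 1 / (ε * Real.log 2)) * ((a : ℝ) * ε * Real.log 2 + 1) := h3
    _ ≤ (1 + 1 / (ε * Real.log 2)) * Real.exp ((a : ℝ) * ε * Real.log 2) :=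
        mul_le_mul_of_nonneg_left h2 hK.le
    _ = _ := by rw [h1]

/-- Divisor bound: `τ(n) ≪_ε n^ε`. -/
lemma tau_bound (ε : ℝ) (hε : 0 < ε) :
    ∃ C : ℝ, 1 ≤ C ∧ ∀ n : ℕ, 0 < n → (n.divisors.card : ℝ) ≤ C * (n : ℝ) ^ ε := by
  set K : ℝ := 1 + 1 / (ε * Real.log 2) with hKdef
  have hlog : 0 < Real.log 2 := Real.log_pos (by norm_num)
  have hK1 : 1 ≤ K := by
    have : 0 < 1 / (ε * Real.log 2) := by positivity
    simp only [hKdef]; linarith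
  have hK0 : 0 < K := lt_of_lt_of_le one_pos hK1
  set B : ℕ := ⌈(2 : ℝ) ^ (1 / ε)⌉₊ with hBdef
  refine ⟨K ^ B, one_le_pow₀ hK1, fun n hn => ?_⟩
  set S := n.primeFactors with hSdef
  set f : ℕ → ℕ := fun p => n.factorization p with hfdef
  set g : ℕ → ℝ := fun p => if (p : ℝ) ^ ε < 2 then K else 1 with hgdef
  have hcard : (n.divisors.card : ℝ) = ∏ p ∈ S, ((f p : ℝ) + 1) := by
    rw [Nat.card_divisors hn.ne']
    push_cast
    rfl
  -- per factor bound
  have claim1 : ∀ p ∈ S, (f p : ℝ) + 1 ≤ g p * (p : ℝ) ^ ((f p : ℝ) * ε) := by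
    intro p hp
    have hp2 : 2 ≤ p := (Nat.prime_of_mem_primeFactors hp).two_le
    have hp2R : (2 : ℝ) ≤ (p : ℝ) := by exact_mod_cast hp2
    by_cases h : (p : ℝ) ^ ε < 2
    · have hg : g p = K := if_pos h
      rw [hg]
      refine le_trans (by exact_mod_cast aux_pow2 ε hε (f p)) ?_
      refine mul_le_mul_of_nonneg_left ?_ hK0.le
      exact Real.rpow_le_rpow (by norm_num) hp2R (by positivity)
    · have hg : g p = 1 := if_neg h
      push_neg at h
      have hre : (p : ℝ) ^ ((f p : ℝ) * ε) = ((p : ℝ) ^ ε) ^ (f p) := by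
        rw [mul_comm, Real.rpow_mul (by positivity), Real.rpow_natCast]
      have h2f : ((f p : ℝ) + 1) ≤ 2 ^ (f p) := by
        have := Nat.lt_two_pow_self (n := f p)
        have : f p + 1 ≤ 2 ^ (f p) := this
        exact_mod_cast this
      have : (2 : ℝ) ^ (f p) ≤ ((p : ℝ) ^ ε) ^ (f p) :=
        pow_le_pow_left₀ (by norm_num) h _
      rw [hg, one_mul, hre]
      linarith
  have hprod : (n.divisors.card : ℝ) ≤ (∏ p ∈ S, g p) * ∏ p ∈ S, (p : ℝ) ^ ((f p : ℝ) * ε) := by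
    rw [hcard, ← Finset.prod_mul_distrib]
    exact Finset.prod_le_prod (fun p _ => by positivity) claim1
  -- product of rpow equals n^ε
  have hnε : ∏ p ∈ S, (p : ℝ) ^ ((f p : ℝ) * ε) = (n : ℝ) ^ ε := by
    have h1 : ∀ p ∈ S, (p : ℝ) ^ ((f p : ℝ) * ε) = ((p ^ f p : ℕ) : ℝ) ^ ε := by
      intro p hp
      rw [Real.rpow_mul (by positivity), Real.rpow_natCast]
      push_cast
      rfl
    rw [Finset.prod_congr rfl h1, Real.finset_prod_rpow _ _ (fun p _ => by positivity)]
    congr 1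
    rw [← Nat.cast_prod]
    congr 1
    have := Nat.factorization_prod_pow_eq_self hn.ne'
    rw [Finsupp.prod] at this
    exact this
  -- product of g bounded by K^B
  have hg : ∏ p ∈ S, g p ≤ K ^ B := by
    rw [hgdef]
    rw [Finset.prod_ite, Finset.prod_const, Finset.prod_const, one_pow, mul_one]
    refine pow_le_pow_right₀ hK1 ?_
    refine le_trans (Finset.card_le_card (?_ : _ ⊆ Finset.range B)) (by simp)
    intro p hp
    simp only [Finset.mem_filter] at hp
    rw [Finset.mem_range]
    have hplt : (p : ℝ) < (2 : ℝ) ^ (1 / ε) := by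
      have hcond := hp.2
      by_contra hcon
      push_neg at hcon
      have h2 : ((2:ℝ) ^ (1/ε)) ^ ε = 2 := by
        rw [← Real.rpow_mul (by norm_num), one_div_mul_cancel hε.ne', Real.rpow_one]
      have h3 := Real.rpow_le_rpow (by positivity : (0:ℝ) ≤ (2:ℝ)^(1/ε)) hcon hε.le
      rw [h2] at h3
      linarith
    have hpB : (p : ℝ) < (B : ℝ) := lt_of_lt_of_le hplt (Nat.le_ceil _)
    exact_mod_cast hpB
  have hnn : (0:ℝ) ≤ (n:ℝ) ^ ε := by positivity
  calc (n.divisors.card : ℝ) ≤ (∏ p ∈ S, g p) * (n : ℝ) ^ ε := by rw [← hnε]; exact hprod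
    _ ≤ K ^ B * (n : ℝ) ^ ε := mul_le_mul_of_nonneg_right hg hnn

section helpers

/-- The key rearrangement: expand `A m d` by multiplicativity and swap sums. -/
lemma key_rearrange (A : ℕ → ℕ → ℂ) (d : ℕ) (hd : 0 < d) (N : ℕ) (α : ℝ)
    (hmult : ∀ m : ℕ, 0 < m →
      A m d = ∑ ℓ ∈ (Nat.gcd d m).divisors,
        ((ArithmeticFunction.moebius ℓ : ℤ) : ℂ) * A 1 (d / ℓ) * A (m / ℓ) 1) :
    ∑ m ∈ Finset.Icc 1 N, A m d * ec ((m : ℝ) * α)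
      = ∑ ℓ ∈ d.divisors, ((ArithmeticFunction.moebius ℓ : ℤ) : ℂ) * A 1 (d / ℓ) *
          ∑ n ∈ Finset.Icc 1 (N / ℓ), A n 1 * ec ((n : ℝ) * ((ℓ : ℝ) * α)) := by
  have step1 : ∀ m ∈ Finset.Icc 1 N, A m d * ec ((m : ℝ) * α)
      = ∑ ℓ ∈ d.divisors, (if ℓ ∣ m then
          ((ArithmeticFunction.moebius ℓ : ℤ) : ℂ) * A 1 (d / ℓ) * A (m / ℓ) 1
            * ec ((m : ℝ) * α) else 0) := by
    intro m hm
    rw [Finset.mem_Icc] at hm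
    have hm1 : 0 < m := hm.1
    have hgcd : (Nat.gcd d m).divisors = d.divisors.filter (· ∣ m) := by
      ext ℓ
      simp only [Nat.mem_divisors, Finset.mem_filter, Nat.dvd_gcd_iff]
      constructor
      · rintro ⟨⟨h1, h2⟩, -⟩; exact ⟨⟨h1, hd.ne'⟩, h2⟩
      · rintro ⟨⟨h1, -⟩, h2⟩
        exact ⟨⟨h1, h2⟩, Nat.gcd_ne_zero_left hd.ne'⟩
    rw [hmult m hm1, hgcd, Finset.sum_filter, Finset.sum_mul]
    refine Finset.sum_congr rfl fun ℓ _ => ?_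
    split <;> simp
  rw [Finset.sum_congr rfl step1, Finset.sum_comm]
  refine Finset.sum_congr rfl fun ℓ hℓ => ?_
  have hℓd : ℓ ∣ d := (Nat.mem_divisors.mp hℓ).1
  have hℓ0 : 0 < ℓ := Nat.pos_of_mem_divisors hℓ
  rw [Finset.sum_ite, Finset.sum_const_zero, add_zero, Finset.mul_sum]
  refine Finset.sum_nbij' (fun m => m / ℓ) (fun n => ℓ * n) ?_ ?_ ?_ ?_ ?_
  · intro m hm
    simp only [Finset.mem_filter, Finset.mem_Icc] at hm
    obtain ⟨⟨hm1, hmN⟩, hdvd⟩ := hm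
    rw [Finset.mem_Icc]
    exact ⟨Nat.one_le_div_iff hℓ0 |>.mpr (Nat.le_of_dvd hm1 hdvd),
      Nat.div_le_div_right hmN⟩
  · intro n hn
    rw [Finset.mem_Icc] at hn
    simp only [Finset.mem_filter, Finset.mem_Icc]
    have hn0 : 0 < n := hn.1
    refine ⟨⟨Nat.one_le_iff_ne_zero.mpr (Nat.mul_ne_zero hℓ0.ne' hn0.ne'), ?_⟩, Dvd.intro n rfl⟩
    rw [Nat.mul_comm]
    exact (Nat.le_div_iff_mul_le hℓ0).mp hn.2
  · intro m hm
    simp only [Finset.mem_filter] at hm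
    exact Nat.mul_div_cancel' hm.2
  · intro n _
    exact Nat.mul_div_cancel_left n hℓ0
  · intro m hm
    simp only [Finset.mem_filter, Finset.mem_Icc] at hm
    have : ((ℓ * (m / ℓ) : ℕ) : ℝ) = (m : ℝ) := by
      rw [Nat.mul_div_cancel' hm.2]
    have harg : ((m / ℓ : ℕ) : ℝ) * ((ℓ : ℝ) * α) = (m : ℝ) * α := by
      rw [← this]; push_cast; ring
    rw [harg]; ring

end helpers

/-- If the Hecke eigenvalues `A(m,d)` of a normalised SL₃(ℤ) Hecke–Maass cusp form satisfy
the multiplicativity relation `A(m,d) = ∑_{ℓ | gcd(d,m)} μ(ℓ) A(1,d/ℓ) A(m/ℓ,1)`,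
Miller's bound `∑_{m ≤ x} A(m,1) e(mα) ≪_ε x^{3/4+ε}` uniformly in `α`, the Rankin–Selberg
bound `∑_{m ≤ x} |A(1,m)| ≪_ε x^{1+ε}`, and `|A(1,n)| ≪_ε n^{ϑ+ε}`, then
`∑_{m ≤ x} A(m,d) e(mα) ≪_ε d^{ϑ+ε} x^{3/4+ε}` uniformly in `α` and `d`. -/
theorem twisted_sum_A_m_d_bound (A : ℕ → ℕ → ℂ) (ϑ : ℝ) (hϑ0 : 0 ≤ ϑ) (hϑ1 : ϑ ≤ 5/14)
    (hmult : ∀ m d : ℕ, 0 < m → 0 < d →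
      A m d = ∑ ℓ ∈ (Nat.gcd d m).divisors,
        ((ArithmeticFunction.moebius ℓ : ℤ) : ℂ) * A 1 (d / ℓ) * A (m / ℓ) 1)
    (hA1 : ∀ ε : ℝ, 0 < ε → ∃ C : ℝ, 0 < C ∧ ∀ n : ℕ, 0 < n →
      ‖A 1 n‖ ≤ C * (n : ℝ) ^ (ϑ + ε))
    (hMiller : ∀ ε : ℝ, 0 < ε → ∃ C : ℝ, 0 < C ∧ ∀ x : ℝ, 1 ≤ x → ∀ α : ℝ,
      ‖∑ m ∈ Finset.Icc 1 ⌊x⌋₊, A m 1 * ec ((m : ℝ) * α)‖ ≤ C * x ^ ((3:ℝ)/4 + ε))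
    (hRS : ∀ ε : ℝ, 0 < ε → ∃ C : ℝ, 0 < C ∧ ∀ x : ℝ, 1 ≤ x →
      ∑ m ∈ Finset.Icc 1 ⌊x⌋₊, ‖A 1 m‖ ≤ C * x ^ ((1:ℝ) + ε)) :
    ∀ ε : ℝ, 0 < ε → ∃ C : ℝ, 0 < C ∧ ∀ d : ℕ, 0 < d → ∀ x : ℝ, 1 ≤ x → ∀ α : ℝ,
      ‖∑ m ∈ Finset.Icc 1 ⌊x⌋₊, A m d * ec ((m : ℝ) * α)‖
        ≤ C * (d : ℝ) ^ (ϑ + ε) * x ^ ((3:ℝ)/4 + ε) := by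
  intro ε hε
  obtain ⟨Cτ, hCτ1, hτ⟩ := tau_bound (ε/2) (by positivity)
  obtain ⟨C1, hC10, h1⟩ := hA1 (ε/2) (by positivity)
  obtain ⟨CM, hCM0, hM⟩ := hMiller ε hε
  refine ⟨Cτ * C1 * CM, by positivity, ?_⟩
  intro d hd x hx α
  rw [key_rearrange A d hd ⌊x⌋₊ α (fun m hm => hmult m d hm hd)]
  -- bound each term
  have hterm : ∀ ℓ ∈ d.divisors,
      ‖((ArithmeticFunction.moebius ℓ : ℤ) : ℂ) * A 1 (d / ℓ) *
          ∑ n ∈ Finset.Icc 1 (⌊x⌋₊ / ℓ), A n 1 * ec ((n : ℝ) * ((ℓ : ℝ) * α))‖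
        ≤ C1 * (d : ℝ) ^ (ϑ + ε/2) * (CM * x ^ ((3:ℝ)/4 + ε)) := by
    intro ℓ hℓ
    have hℓ0 : 0 < ℓ := Nat.pos_of_mem_divisors hℓ
    have hℓd : ℓ ∣ d := (Nat.mem_divisors.mp hℓ).1
    have hdℓ : 0 < d / ℓ := Nat.div_pos (Nat.le_of_dvd hd hℓd) hℓ0
    have hμ : ‖((ArithmeticFunction.moebius ℓ : ℤ) : ℂ)‖ ≤ 1 := by
      rw [Complex.norm_intCast]
      exact_mod_cast ArithmeticFunction.abs_moebius_le_one
    have hAdℓ : ‖A 1 (d / ℓ)‖ ≤ C1 * (d : ℝ) ^ (ϑ + ε/2) := by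
      refine (h1 _ hdℓ).trans ?_
      refine mul_le_mul_of_nonneg_left ?_ hC10.le
      refine Real.rpow_le_rpow (by positivity) ?_ (by positivity)
      exact_mod_cast Nat.div_le_self d ℓ
    have hinner : ‖∑ n ∈ Finset.Icc 1 (⌊x⌋₊ / ℓ), A n 1 * ec ((n : ℝ) * ((ℓ : ℝ) * α))‖
        ≤ CM * x ^ ((3:ℝ)/4 + ε) := by
      by_cases hcase : (ℓ : ℝ) ≤ x
      · have hx1 : (1:ℝ) ≤ x / ℓ := by
          rw [le_div_iff₀ (by exact_mod_cast hℓ0)]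
          simpa using hcase
        have := hM (x / ℓ) hx1 ((ℓ : ℝ) * α)
        rw [Nat.floor_div_natCast x ℓ] at this
        refine this.trans ?_
        refine mul_le_mul_of_nonneg_left ?_ hCM0.le
        refine Real.rpow_le_rpow (by positivity) ?_ (by positivity)
        exact div_le_self (by linarith) (by exact_mod_cast hℓ0)
      · push_neg at hcase
        have hfl : ⌊x⌋₊ / ℓ = 0 := by
          apply Nat.div_eq_of_lt
          have h1 : (⌊x⌋₊ : ℝ) ≤ x := Nat.floor_le (by linarith)
          exact_mod_cast h1.trans_lt hcase
        rw [hfl, Finset.Icc_eq_empty (by norm_num : ¬(1:ℕ) ≤ 0), Finset.sum_empty, norm_zero]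
        positivity
    calc ‖_ * _ * _‖ = ‖((ArithmeticFunction.moebius ℓ : ℤ) : ℂ)‖ * ‖A 1 (d / ℓ)‖ *
          ‖∑ n ∈ Finset.Icc 1 (⌊x⌋₊ / ℓ), A n 1 * ec ((n : ℝ) * ((ℓ : ℝ) * α))‖ := by
            rw [norm_mul, norm_mul]
      _ ≤ 1 * (C1 * (d : ℝ) ^ (ϑ + ε/2)) * (CM * x ^ ((3:ℝ)/4 + ε)) :=
            mul_le_mul (mul_le_mul hμ hAdℓ (norm_nonneg _) (by norm_num))
              hinner (norm_nonneg _) (by positivity)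
      _ = C1 * (d : ℝ) ^ (ϑ + ε/2) * (CM * x ^ ((3:ℝ)/4 + ε)) := by ring
  calc ‖∑ ℓ ∈ d.divisors, _‖ ≤ ∑ ℓ ∈ d.divisors, ‖((ArithmeticFunction.moebius ℓ : ℤ) : ℂ) *
          A 1 (d / ℓ) * ∑ n ∈ Finset.Icc 1 (⌊x⌋₊ / ℓ), A n 1 * ec ((n : ℝ) * ((ℓ : ℝ) * α))‖ :=
        norm_sum_le _ _
    _ ≤ ∑ _ℓ ∈ d.divisors, C1 * (d : ℝ) ^ (ϑ + ε/2) * (CM * x ^ ((3:ℝ)/4 + ε)) :=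
        Finset.sum_le_sum hterm
    _ = (d.divisors.card : ℝ) * (C1 * (d : ℝ) ^ (ϑ + ε/2) * (CM * x ^ ((3:ℝ)/4 + ε))) := by
        rw [Finset.sum_const, nsmul_eq_mul]
    _ ≤ (Cτ * (d : ℝ) ^ (ε/2)) * (C1 * (d : ℝ) ^ (ϑ + ε/2) * (CM * x ^ ((3:ℝ)/4 + ε))) := by
        refine mul_le_mul_of_nonneg_right (hτ d hd) (by positivity)
    _ = Cτ * C1 * CM * ((d : ℝ) ^ (ε/2) * (d : ℝ) ^ (ϑ + ε/2)) * x ^ ((3:ℝ)/4 + ε) := by ring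
    _ = Cτ * C1 * CM * (d : ℝ) ^ (ϑ + ε) * x ^ ((3:ℝ)/4 + ε) := by
        rw [← Real.rpow_add (by exact_mod_cast hd)]
        ring_nf
end

section
/- Suppose F₀, F₁, F₂ : [0,∞) → ℂ are continuous with F₁' = F₀, F₂' = F₁, and suppose there are constants C, D, X > 0 and 0 < H ≤ X such that ∫_X^{2X+H} |F₂(t)|² dt ≤ C and ∫_X^{3X} |F₀(t)|² dt ≤ D. Then ∫_X^{2X} |F₁(x)|² dx ≤ 8 C / H² + 8 H² D. -/
open scoped BigOperators
open MeasureTheory intervalIntegral Set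
set_option maxHeartbeats 1000000

section helpers

lemma cs_interval (a b : ℝ) (hab : a ≤ b) (f : ℝ → ℝ)
    (hf : ContinuousOn f (Set.Icc a b)) (hf0 : ∀ u ∈ Set.Icc a b, 0 ≤ f u) :
    (∫ u in a..b, f u) ^ 2 ≤ (b - a) * ∫ u in a..b, (f u) ^ 2 := by
  set μ := volume.restrict (Set.Ioc a b) with hμ
  have hmeas : AEStronglyMeasurable f μ :=
    (hf.mono Set.Ioc_subset_Icc_self).aestronglyMeasurable measurableSet_Ioc
  obtain ⟨M, hM⟩ : ∃ M, ∀ u ∈ Set.Icc a b, ‖f u‖ ≤ M :=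
    IsCompact.exists_bound_of_continuousOn isCompact_Icc hf
  have hae : ∀ᵐ u ∂μ, 0 ≤ f u := by
    rw [hμ, ae_restrict_iff' measurableSet_Ioc]
    exact Filter.Eventually.of_forall fun u hu => hf0 u (Set.Ioc_subset_Icc_self hu)
  have hfLp : MemLp f (ENNReal.ofReal 2) μ := by
    rw [show ENNReal.ofReal 2 = 2 by norm_num]
    refine MemLp.of_bound hmeas M ?_
    rw [hμ, ae_restrict_iff' measurableSet_Ioc]
    exact Filter.Eventually.of_forall fun u hu => hM u (Set.Ioc_subset_Icc_self hu)
  have h1Lp : MemLp (fun _ : ℝ => (1:ℝ)) (ENNReal.ofReal 2) μ := memLp_const 1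
  have hpq : Real.HolderConjugate 2 2 := by constructor <;> norm_num
  have key := MeasureTheory.integral_mul_le_Lp_mul_Lq_of_nonneg hpq
    (f := f) (g := fun _ => (1:ℝ)) hae
    (Filter.Eventually.of_forall fun _ => zero_le_one) hfLp h1Lp
  simp only [mul_one] at key
  have hI : (∫ u in a..b, f u) = ∫ u, f u ∂μ := intervalIntegral.integral_of_le hab
  have hJ : (∫ u in a..b, (f u) ^ 2) = ∫ u, (f u) ^ (2:ℝ) ∂μ := by
    rw [intervalIntegral.integral_of_le hab]
    refine setIntegral_congr_fun measurableSet_Ioc fun u hu => ?_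
    rw [← Real.rpow_natCast (f u) 2]
    norm_num
  have hμuniv : ∫ u, (1:ℝ) ^ (2:ℝ) ∂μ = b - a := by
    simp [hμ, Real.volume_Ioc, ENNReal.toReal_ofReal (sub_nonneg.2 hab), hab]
  rw [hμuniv] at key
  have hJ0 : 0 ≤ ∫ u, (f u) ^ (2:ℝ) ∂μ := by
    refine integral_nonneg_of_ae ?_
    filter_upwards [hae] with u hu using Real.rpow_nonneg hu _
  have hI0 : 0 ≤ ∫ u, f u ∂μ := integral_nonneg_of_ae hae
  have hRHS : ((∫ u, (f u) ^ (2:ℝ) ∂μ) ^ ((1:ℝ)/2) * (b - a) ^ ((1:ℝ)/2)) ^ 2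
      = (b - a) * ∫ u, (f u) ^ (2:ℝ) ∂μ := by
    rw [mul_pow, ← Real.rpow_natCast (_ ^ ((1:ℝ)/2)) 2, ← Real.rpow_natCast ((b-a) ^ ((1:ℝ)/2)) 2,
      ← Real.rpow_mul hJ0, ← Real.rpow_mul (sub_nonneg.2 hab)]
    norm_num [mul_comm]
  calc (∫ u in a..b, f u) ^ 2 = (∫ u, f u ∂μ) ^ 2 := by rw [hI]
    _ ≤ ((∫ u, (f u) ^ (2:ℝ) ∂μ) ^ ((1:ℝ)/2) * (b - a) ^ ((1:ℝ)/2)) ^ 2 := by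
        apply pow_le_pow_left₀ hI0 key
    _ = (b - a) * ∫ u, (f u) ^ (2:ℝ) ∂μ := hRHS
    _ = (b - a) * ∫ u in a..b, (f u) ^ 2 := by rw [hJ]

lemma pointwise_bound (F₀ F₁ F₂ : ℝ → ℂ)
    (hc0 : ContinuousOn F₀ (Set.Ici 0))
    (hc1 : ContinuousOn F₁ (Set.Ici 0))
    (hd1 : ∀ x ∈ Set.Ioi (0:ℝ), HasDerivAt F₁ (F₀ x) x)
    (hd2 : ∀ x ∈ Set.Ioi (0:ℝ), HasDerivAt F₂ (F₁ x) x)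
    (x H : ℝ) (hx : 0 < x) (hH : 0 < H) :
    H * ‖F₁ x‖ ≤ ‖F₂ (x + H)‖ + ‖F₂ x‖ + H * (∫ u in x..(x + H), ‖F₀ u‖) := by
  have hxH : x ≤ x + H := by linarith
  have hsub : Set.uIcc x (x + H) ⊆ Set.Ioi 0 := by
    rw [Set.uIcc_of_le hxH]
    exact fun t ht => lt_of_lt_of_le hx ht.1
  have hsub' : Set.uIcc x (x + H) ⊆ Set.Ici 0 := fun t ht => Set.mem_Ici.2 (le_of_lt (hsub ht))
  have hF1int : IntervalIntegrable F₁ volume x (x + H) :=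
    (hc1.mono hsub').intervalIntegrable
  have hftc2 : (∫ t in x..(x + H), F₁ t) = F₂ (x + H) - F₂ x :=
    integral_eq_sub_of_hasDerivAt (fun t ht => hd2 t (hsub ht)) hF1int
  have hdiff : ∀ t ∈ Set.Icc x (x + H), F₁ t - F₁ x = ∫ u in x..t, F₀ u := by
    intro t ht
    have hsubt : Set.uIcc x t ⊆ Set.uIcc x (x + H) := Set.uIcc_subset_uIcc
      Set.left_mem_uIcc (by rw [Set.uIcc_of_le hxH]; exact ht)
    have : (∫ u in x..t, F₀ u) = F₁ t - F₁ x :=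
      integral_eq_sub_of_hasDerivAt (fun u hu => hd1 u (hsub (hsubt hu)))
        ((hc0.mono (fun u hu => hsub' (hsubt hu))).intervalIntegrable)
    rw [this]
  -- split the integral
  have hsplit : (∫ t in x..(x + H), F₁ t)
      = (∫ t in x..(x + H), (F₁ t - F₁ x)) + H • F₁ x := by
    have e := intervalIntegral.integral_sub hF1int (intervalIntegrable_const (c := F₁ x))
    rw [e, intervalIntegral.integral_const, add_sub_cancel_left]
    abel
  have hkey : H • F₁ x = (F₂ (x + H) - F₂ x) - ∫ t in x..(x + H), (F₁ t - F₁ x) := by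
    rw [← hftc2, hsplit]; abel
  set c : ℝ := ∫ u in x..(x + H), ‖F₀ u‖ with hc
  have hF0nint : IntervalIntegrable (fun u => ‖F₀ u‖) volume x (x + H) :=
    (hc0.mono hsub').norm.intervalIntegrable
  have hbound : ∀ t ∈ Set.Icc x (x + H), ‖F₁ t - F₁ x‖ ≤ c := by
    intro t ht
    rw [hdiff t ht]
    calc ‖∫ u in x..t, F₀ u‖ ≤ ∫ u in x..t, ‖F₀ u‖ :=
          intervalIntegral.norm_integral_le_integral_norm ht.1
      _ ≤ c := intervalIntegral.integral_mono_interval le_rfl ht.1 ht.2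
          (Filter.Eventually.of_forall fun u => norm_nonneg _) hF0nint
  have hnormint : IntervalIntegrable (fun t => ‖F₁ t - F₁ x‖) volume x (x + H) :=
    ((hc1.mono hsub').sub continuousOn_const).norm.intervalIntegrable
  have hI : (∫ t in x..(x + H), ‖F₁ t - F₁ x‖) ≤ H * c := by
    calc (∫ t in x..(x + H), ‖F₁ t - F₁ x‖) ≤ ∫ _t in x..(x + H), c :=
          intervalIntegral.integral_mono_on hxH hnormint intervalIntegrable_const hbound
      _ = H * c := by rw [intervalIntegral.integral_const, smul_eq_mul, add_sub_cancel_left]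
  have hnorm : ‖H • F₁ x‖ = H * ‖F₁ x‖ := by
    rw [norm_smul, Real.norm_of_nonneg hH.le]
  calc H * ‖F₁ x‖ = ‖H • F₁ x‖ := hnorm.symm
    _ = ‖(F₂ (x + H) - F₂ x) - ∫ t in x..(x + H), (F₁ t - F₁ x)‖ := by rw [hkey]
    _ ≤ ‖F₂ (x + H) - F₂ x‖ + ‖∫ t in x..(x + H), (F₁ t - F₁ x)‖ := norm_sub_le _ _
    _ ≤ (‖F₂ (x + H)‖ + ‖F₂ x‖) + ∫ t in x..(x + H), ‖F₁ t - F₁ x‖ :=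
        add_le_add (norm_sub_le _ _) (intervalIntegral.norm_integral_le_integral_norm hxH)
    _ ≤ (‖F₂ (x + H)‖ + ‖F₂ x‖) + H * c := add_le_add_right hI _
    _ = ‖F₂ (x + H)‖ + ‖F₂ x‖ + H * c := by ring

end helpers

/-- The abstract second-moment transfer inequality: if `F₁' = F₀`, `F₂' = F₁` on `(0,∞)`,
`0 < H ≤ X`, `∫_X^{2X+H} |F₂|² ≤ C` and `∫_X^{3X} |F₀|² ≤ D`, then
`∫_X^{2X} |F₁|² ≤ 8C/H² + 8H²D`. -/
theorem second_moment_transfer (F₀ F₁ F₂ : ℝ → ℂ)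
    (hc0 : ContinuousOn F₀ (Set.Ici 0))
    (hc1 : ContinuousOn F₁ (Set.Ici 0))
    (hc2 : ContinuousOn F₂ (Set.Ici 0))
    (hd1 : ∀ x ∈ Set.Ioi (0:ℝ), HasDerivAt F₁ (F₀ x) x)
    (hd2 : ∀ x ∈ Set.Ioi (0:ℝ), HasDerivAt F₂ (F₁ x) x)
    (C D X H : ℝ) (hX : 0 < X) (hH : 0 < H) (hHX : H ≤ X)
    (hC : (∫ t in X..(2 * X + H), ‖F₂ t‖ ^ 2) ≤ C)
    (hD : (∫ t in X..(3 * X), ‖F₀ t‖ ^ 2) ≤ D) :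
    (∫ x in X..(2 * X), ‖F₁ x‖ ^ 2) ≤ 8 * C / H ^ 2 + 8 * H ^ 2 * D := by
  set g : ℝ → ℝ := fun u => ‖F₀ u‖ ^ 2 with hgdef
  have hgc : ContinuousOn g (Set.Ici 0) := (hc0.norm).pow 2
  have hf2c : ContinuousOn (fun t => ‖F₂ t‖ ^ 2) (Set.Ici 0) := (hc2.norm).pow 2
  have hf1c : ContinuousOn (fun t => ‖F₁ t‖ ^ 2) (Set.Ici 0) := (hc1.norm).pow 2
  -- basic interval inclusions
  have hIcc : ∀ {a b : ℝ}, 0 ≤ a → Set.uIcc a b ⊆ Set.Ici 0 → True := fun _ _ => trivial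
  have hsub3 : Set.uIcc X (3 * X) ⊆ Set.Ici 0 := by
    rw [Set.uIcc_of_le (by linarith)]; exact fun t ht => le_trans hX.le ht.1
  have hsubIci : ∀ {a b : ℝ}, X ≤ a → Set.uIcc a b ⊆ Set.Ici 0 → True := fun _ _ => trivial
  clear hIcc hsubIci
  -- G is the primitive of g from X
  set G : ℝ → ℝ := fun t => ∫ u in X..t, g u with hGdef
  have hgint3 : IntervalIntegrable g volume X (3 * X) := (hgc.mono hsub3).intervalIntegrable
  have hGcont : ContinuousOn G (Set.uIcc X (3 * X)) :=
    intervalIntegral.continuousOn_primitive_interval' hgint3 Set.left_mem_uIcc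
  have hIcc3 : Set.uIcc X (3 * X) = Set.Icc X (3 * X) := Set.uIcc_of_le (by linarith)
  -- generic integrability of g on subintervals of [X, 3X]
  have hgsub : ∀ a b : ℝ, X ≤ a → b ≤ 3 * X → a ≤ b → IntervalIntegrable g volume a b := by
    intro a b ha hb hab
    refine (hgc.mono ?_).intervalIntegrable
    rw [Set.uIcc_of_le hab]
    exact fun t ht => le_trans (le_trans hX.le ha) ht.1
  -- pointwise squared bound
  have key : ∀ x ∈ Set.Icc X (2 * X),
      H ^ 2 * ‖F₁ x‖ ^ 2
        ≤ 4 * ‖F₂ (x + H)‖ ^ 2 + 4 * ‖F₂ x‖ ^ 2 + 2 * H ^ 3 * (G (x + H) - G x) := by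
    intro x hx
    have hx0 : 0 < x := lt_of_lt_of_le hX hx.1
    have hxH3 : x + H ≤ 3 * X := by linarith [hx.2]
    have hpb := pointwise_bound F₀ F₁ F₂ hc0 hc1 hd1 hd2 x H hx0 hH
    have hcs := cs_interval x (x + H) (by linarith) (fun u => ‖F₀ u‖)
      ((hc0.norm).mono (fun t ht => le_trans hx0.le ht.1))
      (fun u _ => norm_nonneg _)
    rw [add_sub_cancel_left] at hcs
    have hJeq : (∫ u in x..(x + H), g u) = G (x + H) - G x := by
      rw [hGdef]
      have h1 := intervalIntegral.integral_add_adjacent_intervals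
        (hgsub X x le_rfl (by linarith [hx.2]) hx.1)
        (hgsub x (x + H) hx.1 hxH3 (by linarith))
      simp only []
      linarith [h1]
    set a := ‖F₂ (x + H)‖
    set b := ‖F₂ x‖
    set n := ‖F₁ x‖
    set I := ∫ u in x..(x + H), ‖F₀ u‖
    have hI0 : 0 ≤ I := intervalIntegral.integral_nonneg (by linarith) (fun u _ => norm_nonneg _)
    have ha0 : 0 ≤ a := norm_nonneg _
    have hb0 : 0 ≤ b := norm_nonneg _
    have hn0 : 0 ≤ n := norm_nonneg _
    have hcs' : I ^ 2 ≤ H * (G (x + H) - G x) := by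
      calc I ^ 2 ≤ H * ∫ u in x..(x + H), ‖F₀ u‖ ^ 2 := hcs
        _ = H * (G (x + H) - G x) := by rw [← hJeq]
    have hsq : (H * n) * (H * n) ≤ (a + b + H * I) * (a + b + H * I) :=
      mul_le_mul hpb hpb (by positivity) (by positivity)
    nlinarith [sq_nonneg (a + b - H * I), sq_nonneg (a - b), sq_nonneg H,
      mul_le_mul_of_nonneg_left hcs' (by positivity : (0:ℝ) ≤ 2 * H)]
  -- integrability of all pieces on [X, 2X]
  have hsub2 : Set.uIcc X (2 * X) ⊆ Set.Ici 0 := by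
    rw [Set.uIcc_of_le (by linarith)]; exact fun t ht => le_trans hX.le ht.1
  have hGcont' : ContinuousOn G (Set.Icc X (3 * X)) := by rwa [hIcc3] at hGcont
  have hshiftc : ContinuousOn (fun x : ℝ => ‖F₂ (x + H)‖ ^ 2) (Set.uIcc X (2 * X)) := by
    refine (hf2c.comp (Continuous.continuousOn (by continuity)) ?_)
    intro t ht
    have h0 : (0:ℝ) ≤ t := hsub2 ht
    show (0:ℝ) ≤ t + H
    linarith
  have hGshiftc : ContinuousOn (fun x : ℝ => G (x + H)) (Set.uIcc X (2 * X)) := by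
    refine hGcont'.comp (Continuous.continuousOn (by continuity)) ?_
    rw [Set.uIcc_of_le (by linarith : X ≤ 2 * X)]
    intro t ht
    show t + H ∈ Set.Icc X (3 * X)
    exact ⟨by linarith [ht.1], by linarith [ht.2]⟩
  have hGc2 : ContinuousOn G (Set.uIcc X (2 * X)) := by
    refine hGcont'.mono ?_
    rw [Set.uIcc_of_le (by linarith)]
    exact fun t ht => ⟨ht.1, by linarith [ht.2]⟩
  have hint1 : IntervalIntegrable (fun x => H ^ 2 * ‖F₁ x‖ ^ 2) volume X (2 * X) :=
    (continuousOn_const.mul (hf1c.mono hsub2)).intervalIntegrable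
  have hint2 : IntervalIntegrable (fun x => 4 * ‖F₂ (x + H)‖ ^ 2 + 4 * ‖F₂ x‖ ^ 2
      + 2 * H ^ 3 * (G (x + H) - G x)) volume X (2 * X) := by
    refine (((continuousOn_const.mul hshiftc).add
      (continuousOn_const.mul (hf2c.mono hsub2))).add
      (continuousOn_const.mul (hGshiftc.sub hGc2))).intervalIntegrable
  have hmono := intervalIntegral.integral_mono_on (by linarith : X ≤ 2 * X) hint1 hint2 key
  -- compute/bound the RHS integral
  have hf2int : IntervalIntegrable (fun t => ‖F₂ t‖ ^ 2) volume X (2 * X + H) := by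
    refine (hf2c.mono ?_).intervalIntegrable
    rw [Set.uIcc_of_le (by linarith)]
    exact fun t ht => le_trans hX.le ht.1
  have hf2nonneg : ∀ᵐ t ∂(volume.restrict (Set.Ioc X (2 * X + H))), 0 ≤ ‖F₂ t‖ ^ 2 :=
    Filter.Eventually.of_forall fun t => by positivity
  have hb1 : (∫ x in X..(2 * X), ‖F₂ (x + H)‖ ^ 2) ≤ C := by
    rw [intervalIntegral.integral_comp_add_right (fun t => ‖F₂ t‖ ^ 2) H]
    calc (∫ t in (X + H)..(2 * X + H), ‖F₂ t‖ ^ 2)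
        ≤ ∫ t in X..(2 * X + H), ‖F₂ t‖ ^ 2 :=
          intervalIntegral.integral_mono_interval (by linarith) (by linarith) le_rfl
            hf2nonneg hf2int
      _ ≤ C := hC
  have hb2 : (∫ x in X..(2 * X), ‖F₂ x‖ ^ 2) ≤ C := by
    calc (∫ t in X..(2 * X), ‖F₂ t‖ ^ 2)
        ≤ ∫ t in X..(2 * X + H), ‖F₂ t‖ ^ 2 :=
          intervalIntegral.integral_mono_interval le_rfl (by linarith) (by linarith)
            hf2nonneg hf2int
      _ ≤ C := hC
  have hD0 : 0 ≤ D :=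
    le_trans (intervalIntegral.integral_nonneg (by linarith) (fun u _ => by positivity)) hD
  -- the G-term
  have hGintsub : ∀ a b : ℝ, X ≤ a → b ≤ 3 * X → a ≤ b → IntervalIntegrable G volume a b := by
    intro a b ha hb hab
    refine (hGcont'.mono ?_).intervalIntegrable
    rw [Set.uIcc_of_le hab]
    exact fun t ht => ⟨le_trans ha ht.1, le_trans ht.2 hb⟩
  have hGD : ∀ s ∈ Set.Icc (2 * X) (2 * X + H), G s ≤ D := by
    intro s hs
    calc G s ≤ ∫ u in X..(3 * X), g u :=
        intervalIntegral.integral_mono_interval le_rfl (by linarith [hs.1]) (by linarith [hs.2])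
          (Filter.Eventually.of_forall fun u => by positivity) hgint3
      _ ≤ D := hD
  have hb3 : (∫ x in X..(2 * X), (G (x + H) - G x)) ≤ H * D := by
    have e1 : (∫ x in X..(2 * X), (G (x + H) - G x))
        = (∫ x in X..(2 * X), G (x + H)) - ∫ x in X..(2 * X), G x :=
      intervalIntegral.integral_sub (hGshiftc.intervalIntegrable) (hGc2.intervalIntegrable)
    have e2 : (∫ x in X..(2 * X), G (x + H)) = ∫ t in (X + H)..(2 * X + H), G t :=
      intervalIntegral.integral_comp_add_right G H
    have e3 : (∫ t in (X + H)..(2 * X + H), G t)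
        = (∫ t in (X + H)..(2 * X), G t) + ∫ t in (2 * X)..(2 * X + H), G t :=
      (intervalIntegral.integral_add_adjacent_intervals
        (hGintsub (X + H) (2 * X) (by linarith) (by linarith) (by linarith))
        (hGintsub (2 * X) (2 * X + H) (by linarith) (by linarith) (by linarith))).symm
    have e4 : (∫ t in X..(2 * X), G t)
        = (∫ t in X..(X + H), G t) + ∫ t in (X + H)..(2 * X), G t :=
      (intervalIntegral.integral_add_adjacent_intervals
        (hGintsub X (X + H) le_rfl (by linarith) (by linarith))
        (hGintsub (X + H) (2 * X) (by linarith) (by linarith) (by linarith))).symm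
    have h5 : (∫ t in (2 * X)..(2 * X + H), G t) ≤ H * D := by
      calc (∫ t in (2 * X)..(2 * X + H), G t) ≤ ∫ _t in (2 * X)..(2 * X + H), D :=
          intervalIntegral.integral_mono_on (by linarith)
            (hGintsub (2 * X) (2 * X + H) (by linarith) (by linarith) (by linarith))
            intervalIntegrable_const hGD
        _ = H * D := by rw [intervalIntegral.integral_const, smul_eq_mul]; ring_nf
    have h6 : 0 ≤ ∫ t in X..(X + H), G t := by
      refine intervalIntegral.integral_nonneg (by linarith) fun t ht => ?_
      exact intervalIntegral.integral_nonneg (by linarith [ht.1]) fun u _ => by positivity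
    linarith [e1, e2, e3, e4, h5, h6]
  -- put together
  have hsplit : (∫ x in X..(2 * X), (4 * ‖F₂ (x + H)‖ ^ 2 + 4 * ‖F₂ x‖ ^ 2
      + 2 * H ^ 3 * (G (x + H) - G x)))
      = 4 * (∫ x in X..(2 * X), ‖F₂ (x + H)‖ ^ 2) + 4 * (∫ x in X..(2 * X), ‖F₂ x‖ ^ 2)
        + 2 * H ^ 3 * (∫ x in X..(2 * X), (G (x + H) - G x)) := by
    have i1 : IntervalIntegrable (fun x => 4 * ‖F₂ (x + H)‖ ^ 2) volume X (2 * X) :=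
      (continuousOn_const.mul hshiftc).intervalIntegrable
    have i2 : IntervalIntegrable (fun x => 4 * ‖F₂ x‖ ^ 2) volume X (2 * X) :=
      (continuousOn_const.mul (hf2c.mono hsub2)).intervalIntegrable
    have i3 : IntervalIntegrable (fun x => 2 * H ^ 3 * (G (x + H) - G x)) volume X (2 * X) :=
      (continuousOn_const.mul (hGshiftc.sub hGc2)).intervalIntegrable
    rw [intervalIntegral.integral_add (i1.add i2) i3, intervalIntegral.integral_add i1 i2,
      intervalIntegral.integral_const_mul, intervalIntegral.integral_const_mul,
      intervalIntegral.integral_const_mul]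
  have hmul : H ^ 2 * (∫ x in X..(2 * X), ‖F₁ x‖ ^ 2)
      = ∫ x in X..(2 * X), H ^ 2 * ‖F₁ x‖ ^ 2 :=
    (intervalIntegral.integral_const_mul _ _).symm
  have hfinal : H ^ 2 * (∫ x in X..(2 * X), ‖F₁ x‖ ^ 2) ≤ 8 * C + 2 * H ^ 4 * D := by
    rw [hmul]
    calc (∫ x in X..(2 * X), H ^ 2 * ‖F₁ x‖ ^ 2)
        ≤ ∫ x in X..(2 * X), (4 * ‖F₂ (x + H)‖ ^ 2 + 4 * ‖F₂ x‖ ^ 2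
            + 2 * H ^ 3 * (G (x + H) - G x)) := hmono
      _ = 4 * (∫ x in X..(2 * X), ‖F₂ (x + H)‖ ^ 2) + 4 * (∫ x in X..(2 * X), ‖F₂ x‖ ^ 2)
            + 2 * H ^ 3 * (∫ x in X..(2 * X), (G (x + H) - G x)) := hsplit
      _ ≤ 4 * C + 4 * C + 2 * H ^ 3 * (H * D) := by
          have h3 : 2 * H ^ 3 * (∫ x in X..(2 * X), (G (x + H) - G x)) ≤ 2 * H ^ 3 * (H * D) :=
            mul_le_mul_of_nonneg_left hb3 (by positivity)
          linarith [mul_le_mul_of_nonneg_left hb1 (by norm_num : (0:ℝ) ≤ 4),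
            mul_le_mul_of_nonneg_left hb2 (by norm_num : (0:ℝ) ≤ 4)]
      _ = 8 * C + 2 * H ^ 4 * D := by ring
  have hH2 : (0:ℝ) < H ^ 2 := by positivity
  have : (∫ x in X..(2 * X), ‖F₁ x‖ ^ 2) ≤ (8 * C + 2 * H ^ 4 * D) / H ^ 2 := by
    rw [le_div_iff₀ hH2]
    linarith [hfinal]
  calc (∫ x in X..(2 * X), ‖F₁ x‖ ^ 2) ≤ (8 * C + 2 * H ^ 4 * D) / H ^ 2 := this
    _ = 8 * C / H ^ 2 + 2 * H ^ 2 * D := by field_simp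
    _ ≤ 8 * C / H ^ 2 + 8 * H ^ 2 * D := by nlinarith [sq_nonneg H]
end
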